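/- Let 𝕂 be ℝ or ℂ, let X and Y be locally compact Hausdorff spaces, and let μ_X and μ_Y be fully supported regular Borel measures on X and Y respectively. Suppose T : C_c(X,𝕂) → C_c(Y,𝕂) is a linear bijection which is isometric for the L¹-norms: ∫_Y |Tf| dμ_Y = ∫_X |f| dμ_X for all f ∈ C_c(X,𝕂). Then there exist a homeomorphism φ : Y → X and a continuous nowhere-zero function P : Y → 𝕂 such that Tf(y) = P(y)·f(φ(y)) for all f ∈ C_c(X,𝕂) and y ∈ Y, and moreover |P ∘ φ⁻¹| is a continuous density of μ_X with respect to the pushforward measure φ_*μ_Y, in the sense that ∫_X |P(φ⁻¹(x))|·|f(x)| d(φ_*μ_Y)(x) = ∫_X |f(x)| dμ_X(x) for all f ∈ C_c(X,𝕂). -/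

import Mathlib

/-!
For each `y`, `f ↦ Tf(y)` is a linear functional on `C_c(X)`. Applying the isometry to `f ± g`
gives `∫ (‖Tf + Tg‖ + ‖Tf - Tg‖) dμ_Y = ∫ (‖f + g‖ + ‖f - g‖) dμ_X`. If `f` and `g` have disjoint
supports, the right side is as large as the triangle inequality allows; if `f` and `g` are real
with `|g| ≤ f`, it is as small as allowed. Full support of `μ_Y` turns these extremal integral
identities into pointwise ones, and the parallelogram law then shows that each functional
sends disjointly supported functions to values one of which is `0`, and that
`‖Tg(y)‖ ≤ ‖Tf(y)‖` for real `f`, `g` with `|g| ≤ f`. The first property gives the functional a unique support point `φ(y)`, the second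
makes it vanish on every function vanishing at `φ(y)`, so `Tf(y) = P(y) f(φ(y))`. The same
argument for `T⁻¹` produces the inverse of `φ`, and the density statement is the isometry
after the change of variables `x = φ(y)`.
-/

open Set Topology MeasureTheory CompactlySupported

section Parallelogram

variable {E : Type*} [NormedAddCommGroup E] [InnerProductSpace ℝ E] {a b : E}

lemma eq_zero_or_eq_zero_of_norm_add_add_norm_sub_eq
    (h : ‖a + b‖ + ‖a - b‖ = 2 * ‖a‖ + 2 * ‖b‖) : a = 0 ∨ b = 0 := by
  have hpar := parallelogram_law_with_norm ℝ a b
  have hadd : ‖a + b‖ = ‖a‖ + ‖b‖ := by linarith [norm_add_le a b, norm_sub_le a b]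
  have hsub : ‖a - b‖ = ‖a‖ + ‖b‖ := by linarith [norm_add_le a b, norm_sub_le a b]
  rw [hadd, hsub] at hpar
  have : ‖a‖ * ‖b‖ = 0 := by nlinarith
  simpa [mul_eq_zero] using this

lemma norm_le_of_norm_add_add_norm_sub_eq (h : ‖a + b‖ + ‖a - b‖ = 2 * ‖a‖) : ‖b‖ ≤ ‖a‖ := by
  have hpar := parallelogram_law_with_norm ℝ a b
  have hsq : ‖b‖ ^ 2 ≤ ‖a‖ ^ 2 := by
    nlinarith [mul_nonneg (norm_nonneg (a + b)) (norm_nonneg (a - b)), congrArg (· ^ 2) h]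
  exact (sq_le_sq₀ (norm_nonneg _) (norm_nonneg _)).1 hsq

end Parallelogram

lemma abs_add_add_abs_sub_of_abs_le {a b : ℝ} (h : |b| ≤ a) : |a + b| + |a - b| = 2 * a := by
  rw [abs_le] at h
  rw [abs_of_nonneg (by linarith), abs_of_nonneg (by linarith)]
  ring

lemma Continuous.eq_of_le_of_integral_eq {Y : Type*} [TopologicalSpace Y] [MeasurableSpace Y]
    {μ : Measure Y} [μ.IsOpenPosMeasure] {F G : Y → ℝ} (hF : Continuous F) (hG : Continuous G)
    (hFi : Integrable F μ) (hGi : Integrable G μ) (hFG : F ≤ G)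
    (h : ∫ y, F y ∂μ = ∫ y, G y ∂μ) : F = G :=
  (hF.ae_eq_iff_eq μ hG).1 ((integral_eq_iff_of_ae_le hFi hGi (.of_forall hFG)).1 h)

namespace CompactlySupportedContinuousMap

variable {𝕜 X : Type*} [RCLike 𝕜] [TopologicalSpace X]

noncomputable def ofReal (u : C_c(X, ℝ)) : C_c(X, 𝕜) :=
  u.compLeft ⟨((↑) : ℝ → 𝕜), RCLike.continuous_ofReal⟩

@[simp]
lemma ofReal_apply (u : C_c(X, ℝ)) (x : X) : (ofReal u : C_c(X, 𝕜)) x = (u x : 𝕜) :=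
  compLeft_apply (by simp) u x

lemma ofReal_smul (c : ℝ) (u : C_c(X, ℝ)) : (ofReal (c • u) : C_c(X, 𝕜)) = (c : 𝕜) • ofReal u :=
  ext fun x => by simp

variable (𝕜) in
def evalₗ (x : X) : C_c(X, 𝕜) →ₗ[𝕜] 𝕜 where
  toFun f := f x
  map_add' _ _ := rfl
  map_smul' _ _ := rfl

@[simp]
lemma evalₗ_apply (x : X) (f : C_c(X, 𝕜)) : evalₗ 𝕜 x f = f x := rfl

lemma exists_eqOn_one_tsupport_subset [T2Space X] [LocallyCompactSpace X] {K V : Set X}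
    (hK : IsCompact K) (hV : IsOpen V) (hKV : K ⊆ V) :
    ∃ u : C_c(X, ℝ), EqOn u 1 K ∧ tsupport u ⊆ V ∧ ∀ x, u x ∈ Icc 0 1 := by
  obtain ⟨u, hu1, hucpt, huV, hu01⟩ := exists_continuousMap_one_of_isCompact_subset_isOpen hK hV hKV
  exact ⟨⟨u, hucpt⟩, hu1, huV, hu01⟩

lemma exists_apply_eq_one [T2Space X] [LocallyCompactSpace X] (x : X) :
    ∃ u : C_c(X, 𝕜), u x = 1 := by
  obtain ⟨u, hu1, -, -⟩ :=
    exists_eqOn_one_tsupport_subset isCompact_singleton isOpen_univ (subset_univ {x})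
  exact ⟨ofReal u, by simp [hu1 rfl]⟩

end CompactlySupportedContinuousMap

open CompactlySupportedContinuousMap (ofReal ofReal_apply evalₗ exists_eqOn_one_tsupport_subset
  exists_apply_eq_one)

section Functional

variable {𝕜 X : Type*} [RCLike 𝕜] [TopologicalSpace X] (Λ : C_c(X, 𝕜) →ₗ[𝕜] 𝕜)

def IsSupportPoint (x : X) : Prop :=
  ∀ U ∈ 𝓝 x, ∃ f : C_c(X, 𝕜), tsupport f ⊆ U ∧ Λ f ≠ 0

variable {Λ}

lemma norm_map_le_two_mul_of_norm_le
    (hdom : ∀ u h : C_c(X, ℝ), (∀ x, |h x| ≤ u x) → ‖Λ (ofReal h)‖ ≤ ‖Λ (ofReal u)‖)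
    {g : C_c(X, 𝕜)} {u : C_c(X, ℝ)} (hgu : ∀ x, ‖g x‖ ≤ u x) :
    ‖Λ g‖ ≤ 2 * ‖Λ (ofReal u)‖ := by
  let a : C_c(X, ℝ) :=
    ⟨⟨fun x => RCLike.re (g x), by fun_prop⟩, g.hasCompactSupport.comp_left RCLike.zero_re⟩
  let b : C_c(X, ℝ) :=
    ⟨⟨fun x => RCLike.im (g x), by fun_prop⟩, g.hasCompactSupport.comp_left RCLike.zero_im⟩
  have hg : g = ofReal a + (RCLike.I : 𝕜) • ofReal b :=
    CompactlySupportedContinuousMap.ext fun x => by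
      simp [a, b, mul_comm RCLike.I]
  have ha : ‖Λ (ofReal a)‖ ≤ ‖Λ (ofReal u)‖ :=
    hdom u a fun x => (RCLike.abs_re_le_norm _).trans (hgu x)
  have hb : ‖Λ (ofReal b)‖ ≤ ‖Λ (ofReal u)‖ :=
    hdom u b fun x => (RCLike.abs_im_le_norm _).trans (hgu x)
  have hI : ‖(RCLike.I : 𝕜)‖ ≤ 1 := by rw [RCLike.norm_I]; split_ifs <;> norm_num
  calc ‖Λ g‖ = ‖Λ (ofReal a) + RCLike.I * Λ (ofReal b)‖ := by
        rw [hg, map_add, map_smul, smul_eq_mul]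
    _ ≤ ‖Λ (ofReal a)‖ + ‖Λ (ofReal b)‖ := by
        refine (norm_add_le _ _).trans (add_le_add le_rfl ?_)
        rw [norm_mul]
        exact mul_le_of_le_one_left (norm_nonneg _) hI
    _ ≤ 2 * ‖Λ (ofReal u)‖ := by linarith

variable [T2Space X] {x : X}

lemma IsSupportPoint.eq (hdisj : ∀ f g : C_c(X, 𝕜), f * g = 0 → Λ f = 0 ∨ Λ g = 0) {x' : X}
    (hx : IsSupportPoint Λ x) (hx' : IsSupportPoint Λ x') : x = x' := by
  by_contra hne
  obtain ⟨U, V, hUo, hVo, hxU, hxV, hUV⟩ := t2_separation hne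
  obtain ⟨f, hfU, hf⟩ := hx U (hUo.mem_nhds hxU)
  obtain ⟨g, hgV, hg⟩ := hx' V (hVo.mem_nhds hxV)
  have hfg : f * g = 0 := by
    ext y
    by_contra! h
    obtain ⟨hfy, hgy⟩ := mul_ne_zero_iff.1 h
    exact hUV.le_bot ⟨hfU (subset_tsupport _ hfy), hgV (subset_tsupport _ hgy)⟩
  exact (hdisj f g hfg).elim hf hg

variable [LocallyCompactSpace X]

lemma map_eq_zero_of_forall_not_isSupportPoint {f : C_c(X, 𝕜)}
    (hf : ∀ x ∈ tsupport f, ¬IsSupportPoint Λ x) : Λ f = 0 := by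
  have hloc : ∀ x ∈ tsupport f, ∃ U, IsOpen U ∧ x ∈ U ∧
      ∀ g : C_c(X, 𝕜), tsupport g ⊆ U → Λ g = 0 := by
    intro x hx
    obtain ⟨N, hN, hΛN⟩ : ∃ N ∈ 𝓝 x, ∀ g : C_c(X, 𝕜), tsupport g ⊆ N → Λ g = 0 := by
      simpa [IsSupportPoint] using hf x hx
    exact ⟨interior N, isOpen_interior, mem_interior_iff_mem_nhds.2 hN,
      fun g hg => hΛN g (hg.trans interior_subset)⟩
  choose! U hUo hxU hΛU using hloc
  have hcpt := f.hasCompactSupport.isCompact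
  obtain ⟨t, ht⟩ := hcpt.elim_finite_subcover (fun x : tsupport f => U x)
    (fun x => hUo _ x.2) (fun x hx => mem_iUnion.2 ⟨⟨x, hx⟩, hxU x hx⟩)
  obtain ⟨ρ, hρU, -⟩ := PartitionOfUnity.exists_isSubordinate_of_locallyFinite_t2space hcpt
    (fun i : t => U i.1) (fun i => hUo _ i.1.2) (locallyFinite_of_finite _)
    (by simpa [iUnion_subtype] using ht)
  have hsum : f = ∑ i, ρ i • f := by
    ext x
    by_cases hx : x ∈ tsupport f
    · have h1 := ρ.sum_eq_one hx
      rw [finsum_eq_sum_of_fintype] at h1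
      rw [CompactlySupportedContinuousMap.sum_apply]
      simp only [CompactlySupportedContinuousMap.smulc_apply]
      rw [← Finset.sum_smul, h1, one_smul]
    · simp [image_eq_zero_of_notMem_tsupport hx]
  rw [hsum, map_sum]
  exact Finset.sum_eq_zero fun i _ =>
    hΛU _ i.1.2 _ ((tsupport_smul_subset_left _ _).trans (hρU i))

lemma exists_isSupportPoint (hΛ : Λ ≠ 0) : ∃ x, IsSupportPoint Λ x := by
  by_contra! h
  obtain ⟨f, hf⟩ : ∃ f, Λ f ≠ 0 := by simpa [LinearMap.ext_iff] using hΛ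
  exact hf (map_eq_zero_of_forall_not_isSupportPoint fun x _ => h x)

lemma IsSupportPoint.map_eq_zero_of_eventuallyEq_zero
    (hdisj : ∀ f g : C_c(X, 𝕜), f * g = 0 → Λ f = 0 ∨ Λ g = 0)
    (hx : IsSupportPoint Λ x) {f : C_c(X, 𝕜)} (hf : f =ᶠ[𝓝 x] 0) : Λ f = 0 :=
  map_eq_zero_of_forall_not_isSupportPoint fun _ hz hz' =>
    notMem_tsupport_iff_eventuallyEq.2 hf (hz'.eq hdisj hx ▸ hz)

lemma IsSupportPoint.exists_map_eq_tsupport_subset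
    (hdisj : ∀ f g : C_c(X, 𝕜), f * g = 0 → Λ f = 0 ∨ Λ g = 0)
    (hx : IsSupportPoint Λ x) (f : C_c(X, 𝕜)) {V : Set X} (hV : IsOpen V) (hxV : x ∈ V) :
    ∃ g : C_c(X, 𝕜), Λ g = Λ f ∧ tsupport g ⊆ V ∧ ∀ y, ‖g y‖ ≤ ‖f y‖ := by
  obtain ⟨K, hK, hxK, hKV⟩ := exists_compact_subset hV hxV
  obtain ⟨v, hv1, hvV, hv01⟩ := exists_eqOn_one_tsupport_subset hK hV hKV
  refine ⟨v • f, ?_, (tsupport_smul_subset_left _ _).trans hvV, fun y => ?_⟩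
  · have hloc : f - v • f =ᶠ[𝓝 x] 0 := by
      filter_upwards [mem_interior_iff_mem_nhds.1 hxK] with y hy
      have hvy : v y = 1 := hv1 hy
      simp [hvy]
    rw [eq_comm, ← sub_eq_zero, ← map_sub]
    exact hx.map_eq_zero_of_eventuallyEq_zero hdisj hloc
  · rw [CompactlySupportedContinuousMap.smulc_apply, norm_smul, Real.norm_of_nonneg (hv01 y).1]
    exact mul_le_of_le_one_left (norm_nonneg _) (hv01 y).2

lemma IsSupportPoint.map_eq_zero_of_apply_eq_zero
    (hdisj : ∀ f g : C_c(X, 𝕜), f * g = 0 → Λ f = 0 ∨ Λ g = 0)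
    (hdom : ∀ u h : C_c(X, ℝ), (∀ x, |h x| ≤ u x) → ‖Λ (ofReal h)‖ ≤ ‖Λ (ofReal u)‖)
    (hx : IsSupportPoint Λ x) {f : C_c(X, 𝕜)} (hf : f x = 0) : Λ f = 0 := by
  obtain ⟨K, hK, hKx⟩ := exists_compact_mem_nhds x
  obtain ⟨u, hu1, -, hu01⟩ := exists_eqOn_one_tsupport_subset hK isOpen_univ (subset_univ K)
  set C := ‖Λ (ofReal u)‖
  -- By locality `Λ f` only depends on `f` near `x`, where `‖f‖ < ε = ε u`.
  have hsmall : ∀ ε > 0, ‖Λ f‖ ≤ 2 * ε * C := by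
    intro ε hε
    obtain ⟨g, hgf, hgV, hgf'⟩ := hx.exists_map_eq_tsupport_subset hdisj f
      (isOpen_interior.inter (isOpen_lt f.continuous.norm continuous_const))
      (⟨mem_interior_iff_mem_nhds.2 hKx, by simpa [hf]⟩ : x ∈ interior K ∩ {y | ‖f y‖ < ε})
    have hgu : ∀ y, ‖g y‖ ≤ (ε • u) y := by
      intro y
      by_cases hy : y ∈ tsupport g
      · obtain ⟨hyK, hyε⟩ := hgV hy
        have huy : u y = 1 := hu1 (interior_subset hyK)
        simpa [huy] using ((hgf' y).trans hyε.le)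
      · simpa [image_eq_zero_of_notMem_tsupport hy] using mul_nonneg hε.le (hu01 y).1
    calc ‖Λ f‖ = ‖Λ g‖ := by rw [hgf]
      _ ≤ 2 * ‖Λ (ofReal (ε • u))‖ := norm_map_le_two_mul_of_norm_le hdom hgu
      _ = 2 * ε * C := by
        rw [CompactlySupportedContinuousMap.ofReal_smul, map_smul, norm_smul,
          RCLike.norm_ofReal, abs_of_pos hε, mul_assoc]
  refine norm_le_zero_iff.1 (le_of_forall_pos_le_add fun ε hε => ?_)
  calc ‖Λ f‖ ≤ 2 * (ε / (2 * C + 1)) * C := hsmall _ (by positivity)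
    _ ≤ 0 + ε := by
      rw [zero_add, mul_comm 2, mul_assoc, div_mul_eq_mul_div, div_le_iff₀ (by positivity)]
      nlinarith

lemma IsSupportPoint.map_eq_mul_apply
    (hdisj : ∀ f g : C_c(X, 𝕜), f * g = 0 → Λ f = 0 ∨ Λ g = 0)
    (hdom : ∀ u h : C_c(X, ℝ), (∀ x, |h x| ≤ u x) → ‖Λ (ofReal h)‖ ≤ ‖Λ (ofReal u)‖)
    (hx : IsSupportPoint Λ x) {u : C_c(X, 𝕜)} (hu : u x = 1) (f : C_c(X, 𝕜)) :
    Λ f = Λ u * f x := by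
  have h := hx.map_eq_zero_of_apply_eq_zero hdisj hdom (f := f - f x • u) (by simp [hu])
  rwa [map_sub, map_smul, smul_eq_mul, sub_eq_zero, mul_comm] at h

end Functional

section Isometry

variable {𝕜 X Y : Type*} [RCLike 𝕜]
  [TopologicalSpace X] [MeasurableSpace X] [OpensMeasurableSpace X]
  [TopologicalSpace Y] [MeasurableSpace Y] [OpensMeasurableSpace Y]
  {μX : Measure X} {μY : Measure Y} [IsFiniteMeasureOnCompacts μX] [IsFiniteMeasureOnCompacts μY]
  {L : C_c(X, 𝕜) →ₗ[𝕜] C_c(Y, 𝕜)}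

lemma integral_norm_map_add_norm_map (hL : ∀ f, ∫ y, ‖L f y‖ ∂μY = ∫ x, ‖f x‖ ∂μX)
    (f g : C_c(X, 𝕜)) :
    ∫ y, (‖L f y‖ + ‖L g y‖) ∂μY = ∫ x, (‖f x‖ + ‖g x‖) ∂μX := by
  rw [integral_add (L f).integrable.norm (L g).integrable.norm, hL, hL,
    integral_add f.integrable.norm g.integrable.norm]

variable [μY.IsOpenPosMeasure]

lemma norm_map_add_norm_map_eq_of_le (hL : ∀ f, ∫ y, ‖L f y‖ ∂μY = ∫ x, ‖f x‖ ∂μX)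
    {f g f' g' : C_c(X, 𝕜)} (hX : ∀ x, ‖f x‖ + ‖g x‖ = ‖f' x‖ + ‖g' x‖)
    (hY : ∀ y, ‖L f y‖ + ‖L g y‖ ≤ ‖L f' y‖ + ‖L g' y‖) (y : Y) :
    ‖L f y‖ + ‖L g y‖ = ‖L f' y‖ + ‖L g' y‖ := by
  refine congrFun (Continuous.eq_of_le_of_integral_eq (μ := μY)
    (F := fun y => ‖L f y‖ + ‖L g y‖) (G := fun y => ‖L f' y‖ + ‖L g' y‖) (by fun_prop) (by fun_prop)
    ((L f).integrable.norm.add (L g).integrable.norm)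
    ((L f').integrable.norm.add (L g').integrable.norm) hY ?_) y
  rw [integral_norm_map_add_norm_map hL, integral_norm_map_add_norm_map hL]
  exact integral_congr_ae (.of_forall hX)

lemma map_apply_eq_zero_or_of_mul_eq_zero (hL : ∀ f, ∫ y, ‖L f y‖ ∂μY = ∫ x, ‖f x‖ ∂μX)
    {f g : C_c(X, 𝕜)} (hfg : f * g = 0) (y : Y) : L f y = 0 ∨ L g y = 0 := by
  have hX : ∀ x, ‖(f + g) x‖ + ‖(f - g) x‖ = ‖((2 : 𝕜) • f) x‖ + ‖((2 : 𝕜) • g) x‖ := by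
    intro x
    have hx : f x = 0 ∨ g x = 0 := by simpa using DFunLike.congr_fun hfg x
    rcases hx with h | h <;> simp [h] <;> ring
  have hY : ∀ y, ‖L (f + g) y‖ + ‖L (f - g) y‖ ≤ ‖L ((2 : 𝕜) • f) y‖ + ‖L ((2 : 𝕜) • g) y‖ := by
    intro y
    simp only [map_add, map_sub, map_smul, CompactlySupportedContinuousMap.add_apply,
      CompactlySupportedContinuousMap.sub_apply, CompactlySupportedContinuousMap.smul_apply,
      norm_smul, RCLike.norm_two]
    linarith [norm_add_le (L f y) (L g y), norm_sub_le (L f y) (L g y)]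
  apply eq_zero_or_eq_zero_of_norm_add_add_norm_sub_eq
  simpa [norm_smul] using norm_map_add_norm_map_eq_of_le hL hX hY y

lemma norm_map_ofReal_apply_le (hL : ∀ f, ∫ y, ‖L f y‖ ∂μY = ∫ x, ‖f x‖ ∂μX)
    {u h : C_c(X, ℝ)} (huh : ∀ x, |h x| ≤ u x) (y : Y) :
    ‖L (ofReal h) y‖ ≤ ‖L (ofReal u) y‖ := by
  have hX : ∀ x, ‖ofReal (𝕜 := 𝕜) u x‖ + ‖ofReal (𝕜 := 𝕜) u x‖ =
      ‖(ofReal u + ofReal h : C_c(X, 𝕜)) x‖ + ‖(ofReal u - ofReal h : C_c(X, 𝕜)) x‖ := by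
    intro x
    simp only [CompactlySupportedContinuousMap.add_apply, CompactlySupportedContinuousMap.sub_apply,
      ofReal_apply, ← RCLike.ofReal_add, ← RCLike.ofReal_sub, RCLike.norm_ofReal]
    rw [abs_add_add_abs_sub_of_abs_le (huh x), abs_of_nonneg ((abs_nonneg _).trans (huh x))]
    ring
  have hY : ∀ y, ‖L (ofReal u) y‖ + ‖L (ofReal u) y‖ ≤
      ‖L (ofReal u + ofReal h) y‖ + ‖L (ofReal u - ofReal h) y‖ := by
    intro y
    simp only [map_add, map_sub, CompactlySupportedContinuousMap.add_apply,
      CompactlySupportedContinuousMap.sub_apply]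
    have := norm_add_le (L (ofReal u) y + L (ofReal h) y) (L (ofReal u) y - L (ofReal h) y)
    rw [add_add_sub_cancel, ← two_mul, norm_mul, RCLike.norm_two] at this
    linarith
  apply norm_le_of_norm_add_add_norm_sub_eq
  simpa [two_mul] using (norm_map_add_norm_map_eq_of_le hL hX hY y).symm

end Isometry

section WeightedComposition

variable {𝕜 X Y : Type*} [RCLike 𝕜] [TopologicalSpace X] [T2Space X] [LocallyCompactSpace X]
  [TopologicalSpace Y] {φ : Y → X} {P : Y → 𝕜}

lemma continuous_of_forall_apply_eq_mul_comp {T : C_c(X, 𝕜) → Y → 𝕜}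
    (hT : ∀ f, Continuous (T f)) (hP : ∀ y, P y ≠ 0) (hφ : ∀ f y, T f y = P y * f (φ y)) :
    Continuous φ := by
  refine continuous_iff_continuousAt.2 fun y₀ => ?_
  refine (nhds_basis_opens (φ y₀)).tendsto_right_iff.2 fun U ⟨hxU, hU⟩ => ?_
  obtain ⟨u, hu1, huU, -⟩ :=
    exists_eqOn_one_tsupport_subset isCompact_singleton hU (singleton_subset_iff.2 hxU)
  have hne : T (ofReal u) y₀ ≠ 0 := by simp [hφ, hP, hu1 rfl]
  filter_upwards [(hT (ofReal u)).continuousAt.eventually_ne hne] with y hy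
  refine huU (subset_tsupport _ fun h => hy ?_)
  simp [hφ, h]

lemma continuous_weight_of_forall_apply_eq_mul_comp {T : C_c(X, 𝕜) → Y → 𝕜}
    (hT : ∀ f, Continuous (T f)) (hφc : Continuous φ) (hφ : ∀ f y, T f y = P y * f (φ y)) :
    Continuous P := by
  refine continuous_iff_continuousAt.2 fun y₀ => ?_
  obtain ⟨K, hK, hKx⟩ := exists_compact_mem_nhds (φ y₀)
  obtain ⟨u, hu1, -, -⟩ := exists_eqOn_one_tsupport_subset hK isOpen_univ (subset_univ _)
  refine (hT (ofReal u)).continuousAt.congr ?_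
  filter_upwards [hφc.continuousAt.preimage_mem_nhds hKx] with y hy
  simp [hφ, hu1 hy]

lemma leftInverse_of_forall_apply_eq_mul_comp {L : C_c(X, 𝕜) → C_c(Y, 𝕜)}
    {M : C_c(Y, 𝕜) → C_c(X, 𝕜)} (hML : Function.LeftInverse M L) {ψ : X → Y} {Q : X → 𝕜}
    (hφ : ∀ f y, L f y = P y * f (φ y)) (hψ : ∀ g x, M g x = Q x * g (ψ x)) :
    Function.LeftInverse φ ψ := by
  intro x
  by_contra hne
  obtain ⟨u, hu1, huU, -⟩ := exists_eqOn_one_tsupport_subset isCompact_singleton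
    isOpen_compl_singleton (singleton_subset_iff.2 (Ne.symm hne))
  have hu0 : u (φ (ψ x)) = 0 := image_eq_zero_of_notMem_tsupport fun h => huU h rfl
  have := hψ (L (ofReal u)) x
  simp [hML (ofReal u), hφ, hu1 rfl, hu0] at this

end WeightedComposition

section Representation

variable {𝕜 X Y : Type*} [RCLike 𝕜]
  [TopologicalSpace X] [T2Space X] [LocallyCompactSpace X]
  [MeasurableSpace X] [OpensMeasurableSpace X]
  [TopologicalSpace Y] [T2Space Y] [LocallyCompactSpace Y]
  [MeasurableSpace Y] [OpensMeasurableSpace Y]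
  {μX : Measure X} {μY : Measure Y} [IsFiniteMeasureOnCompacts μX] [IsFiniteMeasureOnCompacts μY]
  [μY.IsOpenPosMeasure]

theorem exists_forall_apply_eq_mul_comp_of_integral_norm_map {L : C_c(X, 𝕜) →ₗ[𝕜] C_c(Y, 𝕜)}
    (hsurj : Function.Surjective L) (hL : ∀ f, ∫ y, ‖L f y‖ ∂μY = ∫ x, ‖f x‖ ∂μX) :
    ∃ (φ : C(Y, X)) (P : C(Y, 𝕜)), (∀ y, P y ≠ 0) ∧ ∀ f y, L f y = P y * f (φ y) := by
  have hone : ∀ y, ∃ f, L f y = 1 := fun y => by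
    obtain ⟨g, hg⟩ := exists_apply_eq_one (𝕜 := 𝕜) y
    obtain ⟨f, rfl⟩ := hsurj g
    exact ⟨f, hg⟩
  have hsupp : ∀ y, ∃ x, IsSupportPoint (evalₗ 𝕜 y ∘ₗ L) x := fun y =>
    exists_isSupportPoint fun h => by
      obtain ⟨f, hf⟩ := hone y
      simpa [hf] using LinearMap.congr_fun h f
  choose φ hφ using hsupp
  choose u hu using exists_apply_eq_one (𝕜 := 𝕜) (X := X)
  have hform : ∀ f y, L f y = L (u (φ y)) y * f (φ y) := fun f y =>
    (hφ y).map_eq_mul_apply (fun _ _ hfg => map_apply_eq_zero_or_of_mul_eq_zero hL hfg y)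
      (fun _ _ huh => norm_map_ofReal_apply_le hL huh y) (hu _) f
  have hP : ∀ y, L (u (φ y)) y ≠ 0 := fun y h => by
    obtain ⟨f, hf⟩ := hone y
    rw [hform, h, zero_mul] at hf
    exact zero_ne_one hf
  have hφc := continuous_of_forall_apply_eq_mul_comp (fun f => (L f).continuous) hP hform
  exact ⟨⟨φ, hφc⟩, ⟨_, continuous_weight_of_forall_apply_eq_mul_comp
    (fun f => (L f).continuous) hφc hform⟩, hP, hform⟩

end Representation

section Restriction

variable {𝕜 X Y : Type*} [RCLike 𝕜] [TopologicalSpace X] [TopologicalSpace Y]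
  {T : C(X, 𝕜) → C(Y, 𝕜)}

noncomputable def restrictCompactSupport
    (hT : MapsTo T {f | HasCompactSupport ⇑f} {g | HasCompactSupport ⇑g})
    (hadd : ∀ f g : C(X, 𝕜), HasCompactSupport ⇑f → HasCompactSupport ⇑g →
      T (f + g) = T f + T g)
    (hsmul : ∀ (c : 𝕜), ∀ f : C(X, 𝕜), HasCompactSupport ⇑f → T (c • f) = c • T f) :
    C_c(X, 𝕜) →ₗ[𝕜] C_c(Y, 𝕜) where
  toFun f := ⟨T f, hT f.hasCompactSupport⟩
  map_add' f g := CompactlySupportedContinuousMap.ext fun y => by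
    change T (f.toContinuousMap + g.toContinuousMap) y = T f y + T g y
    rw [hadd _ _ f.hasCompactSupport g.hasCompactSupport]
    rfl
  map_smul' c f := CompactlySupportedContinuousMap.ext fun y => by
    change T (c • f.toContinuousMap) y = c • T f y
    rw [hsmul _ _ f.hasCompactSupport]
    rfl

lemma bijective_restrictCompactSupport
    (hT : BijOn T {f | HasCompactSupport ⇑f} {g | HasCompactSupport ⇑g})
    (hadd : ∀ f g : C(X, 𝕜), HasCompactSupport ⇑f → HasCompactSupport ⇑g →
      T (f + g) = T f + T g)
    (hsmul : ∀ (c : 𝕜), ∀ f : C(X, 𝕜), HasCompactSupport ⇑f → T (c • f) = c • T f) :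
    Function.Bijective (restrictCompactSupport hT.mapsTo hadd hsmul) := by
  refine ⟨fun f g hfg => ?_, fun g => ?_⟩
  · have : T f = T g := congrArg CompactlySupportedContinuousMap.toContinuousMap hfg
    exact CompactlySupportedContinuousMap.ext
      (ContinuousMap.congr_fun (hT.injOn f.hasCompactSupport g.hasCompactSupport this))
  · obtain ⟨f, hf, hfg⟩ := hT.surjOn g.hasCompactSupport
    exact ⟨⟨f, hf⟩, CompactlySupportedContinuousMap.ext (ContinuousMap.congr_fun hfg)⟩

end Restriction

/-- A linear bijection `T : C_c(X,𝕂) → C_c(Y,𝕂)` isometric for the `L¹`-norms of fully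
supported regular Borel measures `μ_X`, `μ_Y` is a weighted composition operator
`Tf(y) = P(y)·f(φ(y))`, where `|P ∘ φ⁻¹|` is a continuous density of `μ_X` with respect
to the pushforward `φ_*μ_Y`. -/
theorem stmt_18 {𝕜 X Y : Type*} [RCLike 𝕜]
    [TopologicalSpace X] [LocallyCompactSpace X] [T2Space X]
    [MeasurableSpace X] [BorelSpace X]
    [TopologicalSpace Y] [LocallyCompactSpace Y] [T2Space Y]
    [MeasurableSpace Y] [BorelSpace Y]
    (μX : Measure X) (μY : Measure Y) [μX.Regular] [μY.Regular]
    (hXfull : ∀ U : Set X, IsOpen U → U.Nonempty → 0 < μX U)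
    (hYfull : ∀ U : Set Y, IsOpen U → U.Nonempty → 0 < μY U)
    (T : C(X, 𝕜) → C(Y, 𝕜))
    (hTbij : Set.BijOn T {f | HasCompactSupport ⇑f} {g | HasCompactSupport ⇑g})
    (hTadd : ∀ f g : C(X, 𝕜), HasCompactSupport ⇑f → HasCompactSupport ⇑g →
      T (f + g) = T f + T g)
    (hTsmul : ∀ (c : 𝕜), ∀ f : C(X, 𝕜), HasCompactSupport ⇑f → T (c • f) = c • T f)
    (hTiso : ∀ f : C(X, 𝕜), HasCompactSupport ⇑f →
      ∫ y, ‖T f y‖ ∂μY = ∫ x, ‖f x‖ ∂μX) :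
    ∃ (φ : Y ≃ₜ X) (P : Y → 𝕜), Continuous P ∧ (∀ y, P y ≠ 0) ∧
      (∀ f : C(X, 𝕜), HasCompactSupport ⇑f → ∀ y, T f y = P y * f (φ y)) ∧
      (∀ f : C(X, 𝕜), HasCompactSupport ⇑f →
        ∫ x, ‖P (φ.symm x)‖ * ‖f x‖ ∂(μY.map φ) = ∫ x, ‖f x‖ ∂μX) := by
  have : μX.IsOpenPosMeasure := ⟨fun U hU hne => (hXfull U hU hne).ne'⟩
  have : μY.IsOpenPosMeasure := ⟨fun U hU hne => (hYfull U hU hne).ne'⟩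
  let e := LinearEquiv.ofBijective _ (bijective_restrictCompactSupport hTbij hTadd hTsmul)
  have he : ∀ f, ∫ y, ‖e f y‖ ∂μY = ∫ x, ‖f x‖ ∂μX := fun f => hTiso f f.hasCompactSupport
  have he' : ∀ g, ∫ x, ‖e.symm g x‖ ∂μX = ∫ y, ‖g y‖ ∂μY := fun g => by
    rw [← he, e.apply_symm_apply]
  obtain ⟨φ, P, hP, hφ⟩ := exists_forall_apply_eq_mul_comp_of_integral_norm_map e.surjective he
  obtain ⟨ψ, Q, -, hψ⟩ :=
    exists_forall_apply_eq_mul_comp_of_integral_norm_map e.symm.surjective he'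
  let Φ : Y ≃ₜ X :=
    { toFun := φ
      invFun := ψ
      left_inv := leftInverse_of_forall_apply_eq_mul_comp e.apply_symm_apply hψ hφ
      right_inv := leftInverse_of_forall_apply_eq_mul_comp e.symm_apply_apply hφ hψ
      continuous_toFun := φ.continuous
      continuous_invFun := ψ.continuous }
  refine ⟨Φ, P, P.continuous, hP, fun f hf => hφ ⟨f, hf⟩, fun f hf => ?_⟩
  rw [← Φ.toMeasurableEquiv_coe, integral_map_equiv, ← hTiso f hf]
  simp only [Homeomorph.toMeasurableEquiv_coe, Homeomorph.symm_apply_apply, ← norm_mul]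
  exact integral_congr_ae (.of_forall fun y => congrArg norm (hφ ⟨f, hf⟩ y).symm)
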